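/- arXiv:2002.02260 — 2 statements merged into one kernel-verified Lean document; each statement's English description precedes it below -/
import Mathlib

section
/- If a densely defined closed linear operator $T$ between Hilbert spaces $H_1, H_2$ satisfies $\|g\|_{H_2} \le C\|T^*g\|_{H_1}$ for all $g \in D_{T^*} \cap F$ for a closed subspace $F \supset R_T$, then the set of all solutions $x \in D_T$ of $Tx = f$ (for $f \in F$) equals $\{u + v : v \in N_T\}$, where $u$ is the unique solution lying in $D_T \cap N_T^{\perp}$. -/
/-!
The estimate gives `|⟪f, g⟫| ≤ C ‖f‖ ‖T* g‖` for every `g ∈ D(T*)`: projecting `g` onto `F`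
does not change `T* g`, because `Fᗮ ⊆ R_Tᗮ = N_{T*}`. Hence `T* g ↦ ⟪f, g⟫` is a bounded
functional on `R_{T*}`; extending it by Hahn–Banach and representing it by Riesz gives `x`
with `⟪x, T* g⟫ = ⟪f, g⟫` for all `g`, i.e. `(x, f) ∈ (graph T*)^* = graph T` as `T` is closed.
Since `N_T` is closed, `u := x - P_{N_T} x` solves `T u = f` in `N_Tᗮ`; the rest is linear
algebra.
-/

open scoped LinearPMap

section

variable {𝕜 E F : Type*} [RCLike 𝕜] [NormedAddCommGroup E] [InnerProductSpace 𝕜 E]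
  [NormedAddCommGroup F] [InnerProductSpace 𝕜 F]

local notation "⟪" x ", " y "⟫" => inner 𝕜 x y

theorem Submodule.adjoint_adjoint [CompleteSpace E] [CompleteSpace F]
    {g : Submodule 𝕜 (E × F)} (hg : IsClosed (g : Set (E × F))) : g.adjoint.adjoint = g := by
  refine le_antisymm (fun x hx => ?_) fun x hx => ?_
  · set G := g.comap (WithLp.linearEquiv 2 𝕜 (E × F)).toLinearMap
    have : CompleteSpace G :=
      (hg.preimage (WithLp.prod_continuous_ofLp 2 E F)).completeSpace_coe
    suffices WithLp.toLp 2 x ∈ Gᗮᗮ by rwa [G.orthogonal_orthogonal] at this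
    refine (mem_orthogonal _ _).mpr fun w hw => ?_
    have hw' : (w.ofLp.2, -w.ofLp.1) ∈ g.adjoint := by
      refine (mem_adjoint_iff _ _).mpr fun a b hab => ?_
      have := (mem_orthogonal _ _).mp hw (WithLp.toLp 2 (a, b)) hab
      rw [WithLp.prod_inner_apply] at this
      rwa [inner_neg_right, sub_neg_eq_add, add_comm]
    have := (mem_adjoint_iff _ _).mp hx _ _ hw'
    rw [inner_neg_left] at this
    rw [WithLp.prod_inner_apply]
    linear_combination -this
  · refine (mem_adjoint_iff _ _).mpr fun a b hab => ?_
    have := congrArg (starRingEnd 𝕜) ((mem_adjoint_iff _ _).mp hab _ _ hx)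
    rw [map_sub, inner_conj_symm, inner_conj_symm, map_zero] at this
    linear_combination -this

theorem exists_inner_apply_eq_of_norm_le_mul_norm [CompleteSpace E] {V : Type*}
    [AddCommGroup V] [Module 𝕜 V] (A : V →ₗ[𝕜] E) (φ : V →ₗ[𝕜] 𝕜) (K : ℝ)
    (h : ∀ v, ‖φ v‖ ≤ K * ‖A v‖) :
    ∃ u : E, ∀ v, ⟪u, A v⟫ = φ v := by
  have hker : LinearMap.ker A ≤ LinearMap.ker φ := fun v hv => by
    simpa [LinearMap.mem_ker.mp hv] using h v
  set ψ : LinearMap.range A →ₗ[𝕜] 𝕜 :=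
    (LinearMap.ker A).liftQ φ hker ∘ₗ A.quotKerEquivRange.symm.toLinearMap
  have hψ : ∀ v, ψ ⟨A v, LinearMap.mem_range_self A v⟩ = φ v := fun v => by
    simp [ψ, LinearMap.quotKerEquivRange_symm_apply_image]
  have hbound : ∀ y, ‖ψ y‖ ≤ K * ‖y‖ := by
    rintro ⟨_, v, rfl⟩
    exact (hψ v).symm ▸ h v
  obtain ⟨Φ, hΦ, -⟩ := exists_extension_norm_eq _ (ψ.mkContinuous K hbound)
  refine ⟨(InnerProductSpace.toDual 𝕜 E).symm Φ, fun v => ?_⟩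
  rw [InnerProductSpace.toDual_symm_apply, ← hψ]
  exact hΦ ⟨A v, _⟩

namespace LinearPMap

section Algebra

variable {R M N : Type*} [Ring R] [AddCommGroup M] [Module R M] [AddCommGroup N] [Module R N]
  {T : M →ₗ.[R] N}

theorem mem_ker_map_subtype_iff {x : M} :
    x ∈ (LinearMap.ker T.toFun).map T.domain.subtype ↔ (x, 0) ∈ T.graph := by
  simp only [Submodule.mem_map, LinearMap.mem_ker, mem_graph_iff]
  exact ⟨fun ⟨y, hy, hyx⟩ => ⟨y, hyx, hy⟩, fun ⟨y, hyx, hy⟩ => ⟨y, hy, hyx⟩⟩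

theorem sub_mem_ker_map_subtype {x y : T.domain} (h : T x = T y) :
    (x - y : M) ∈ (LinearMap.ker T.toFun).map T.domain.subtype :=
  ⟨x - y, LinearMap.mem_ker.mpr ((T.map_sub x y).trans (sub_eq_zero.mpr h)), rfl⟩

theorem setOf_apply_eq_eq_add_ker {u : T.domain} {f : N} (hu : T u = f) :
    {x : M | ∃ hx : x ∈ T.domain, T ⟨x, hx⟩ = f} =
      {w : M | ∃ v ∈ (LinearMap.ker T.toFun).map T.domain.subtype, w = u + v} := by
  ext x
  constructor
  · rintro ⟨hx, hTx⟩
    exact ⟨_, sub_mem_ker_map_subtype (x := ⟨x, hx⟩) (hTx.trans hu.symm), by abel⟩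
  · rintro ⟨_, ⟨v, hv, rfl⟩, rfl⟩
    exact ⟨(u + v).2, (T.map_add u v).trans (by rw [show T v = 0 from hv, add_zero, hu])⟩

end Algebra

variable {T : E →ₗ.[𝕜] F}

theorem isClosed_ker_map_subtype (hc : T.IsClosed) :
    _root_.IsClosed ((LinearMap.ker T.toFun).map T.domain.subtype : Set E) := by
  have : ((LinearMap.ker T.toFun).map T.domain.subtype : Set E) =
      (fun x => (x, (0 : F))) ⁻¹' T.graph := Set.ext fun _ => mem_ker_map_subtype_iff
  rw [this]
  exact hc.preimage (continuous_id.prodMk continuous_const)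

theorem eq_of_apply_eq_of_mem_orthogonal_ker {u u' : T.domain} (h : T u' = T u)
    (hu : (u : E) ∈ ((LinearMap.ker T.toFun).map T.domain.subtype)ᗮ)
    (hu' : (u' : E) ∈ ((LinearMap.ker T.toFun).map T.domain.subtype)ᗮ) : (u' : E) = u :=
  sub_eq_zero.mp <| Submodule.disjoint_def.mp (Submodule.orthogonal_disjoint _) _
    (sub_mem_ker_map_subtype h) (Submodule.sub_mem _ hu' hu)

variable [CompleteSpace E]

theorem exists_mem_orthogonal_ker_apply_eq (hc : T.IsClosed) (x : T.domain) :
    ∃ u ∈ ((LinearMap.ker T.toFun).map T.domain.subtype)ᗮ, ∃ hu : u ∈ T.domain,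
      T ⟨u, hu⟩ = T x := by
  set K := (LinearMap.ker T.toFun).map T.domain.subtype
  have : CompleteSpace K := (isClosed_ker_map_subtype hc).completeSpace_coe
  obtain ⟨y, hy, hyx⟩ := K.starProjection_apply_mem (x : E)
  refine ⟨(x - y : T.domain), ?_, (x - y).2, ?_⟩
  · rw [Submodule.coe_sub, show (y : E) = _ from hyx]
    exact K.sub_starProjection_mem_orthogonal (x : E)
  · exact (T.map_sub x y).trans (by rw [show T y = 0 from hy, sub_zero])

theorem mem_graph_of_forall_inner_adjoint [CompleteSpace F]
    (hT : Dense (T.domain : Set E)) (hc : T.IsClosed) {u : E} {f : F}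
    (h : ∀ g : T†.domain, ⟪u, T† g⟫ = ⟪f, (g : F)⟫) : (u, f) ∈ T.graph := by
  rw [← Submodule.adjoint_adjoint hc, ← adjoint_graph_eq_graph_adjoint hT,
    Submodule.mem_adjoint_iff]
  intro a b hab
  obtain ⟨g, rfl, rfl⟩ := (mem_graph_iff _).mp hab
  have := congrArg (starRingEnd 𝕜) (h g)
  rw [inner_conj_symm, inner_conj_symm] at this
  simp [this]

theorem exists_adjoint_starProjection_eq (hT : Dense (T.domain : Set E)) (K : Submodule 𝕜 F)
    [K.HasOrthogonalProjection] (hR : ∀ x : T.domain, T x ∈ K) (g : T†.domain) :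
    ∃ hg : K.starProjection g ∈ T†.domain, T† ⟨_, hg⟩ = T† g := by
  have hinner : ∀ x : T.domain, ⟪T† g, x⟫ = ⟪K.starProjection g, T x⟫ := fun x => by
    rw [adjoint_isFormalAdjoint hT, K.inner_starProjection_left_eq_right,
      K.starProjection_eq_self_iff.mpr (hR x)]
  exact ⟨mem_adjoint_domain_of_exists _ ⟨_, hinner⟩, adjoint_apply_eq hT _ hinner⟩

theorem norm_inner_le_of_adjoint_estimate (hT : Dense (T.domain : Set E)) (K : Submodule 𝕜 F)
    [K.HasOrthogonalProjection] (hR : ∀ x : T.domain, T x ∈ K) {C : ℝ}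
    (hest : ∀ g : T†.domain, (g : F) ∈ K → ‖(g : F)‖ ≤ C * ‖T† g‖)
    {f : F} (hf : f ∈ K) (g : T†.domain) : ‖⟪f, (g : F)⟫‖ ≤ C * ‖f‖ * ‖T† g‖ := by
  obtain ⟨hpg, hTpg⟩ := exists_adjoint_starProjection_eq hT K hR g
  calc ‖⟪f, (g : F)⟫‖ = ‖⟪f, K.starProjection g⟫‖ := by
        rw [← K.inner_starProjection_left_eq_right, K.starProjection_eq_self_iff.mpr hf]
    _ ≤ ‖f‖ * ‖K.starProjection g‖ := norm_inner_le_norm _ _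
    _ ≤ ‖f‖ * (C * ‖T† g‖) := by
        gcongr
        exact hTpg ▸ hest ⟨_, hpg⟩ (K.starProjection_apply_mem g)
    _ = C * ‖f‖ * ‖T† g‖ := by ring

end LinearPMap

end

theorem solution_set_eq_of_adjoint_estimate_general
    {H₁ H₂ : Type*} [NormedAddCommGroup H₁] [InnerProductSpace ℂ H₁]
    [NormedAddCommGroup H₂] [InnerProductSpace ℂ H₂]
    [CompleteSpace H₁] [CompleteSpace H₂]
    (T : H₁ →ₗ.[ℂ] H₂)
    (hdense : Dense (T.domain : Set H₁))
    (hclosed : IsClosed (T.graph : Set (H₁ × H₂)))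
    (F : Submodule ℂ H₂) (hF : IsClosed (F : Set H₂))
    (hR : Set.range (fun x : T.domain => T x) ⊆ (F : Set H₂))
    (C : ℝ)
    (hest : ∀ g : T.adjoint.domain, (g : H₂) ∈ F → ‖(g : H₂)‖ ≤ C * ‖T.adjoint g‖)
    (f : H₂) (hf : f ∈ F) :
    ∃ u : H₁, ∃ hu : u ∈ T.domain,
      u ∈ ((LinearMap.ker T.toFun).map T.domain.subtype)ᗮ ∧
      T ⟨u, hu⟩ = f ∧
      (∀ (u' : H₁) (hu' : u' ∈ T.domain),
        u' ∈ ((LinearMap.ker T.toFun).map T.domain.subtype)ᗮ → T ⟨u', hu'⟩ = f → u' = u) ∧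
      {x : H₁ | ∃ hx : x ∈ T.domain, T ⟨x, hx⟩ = f} =
        {w : H₁ | ∃ v ∈ (LinearMap.ker T.toFun).map T.domain.subtype, w = u + v} := by
  have : CompleteSpace F := hF.completeSpace_coe
  have hbound := LinearPMap.norm_inner_le_of_adjoint_estimate hdense F (fun x => hR ⟨x, rfl⟩)
    hest hf
  obtain ⟨y, hy⟩ := exists_inner_apply_eq_of_norm_le_mul_norm T.adjoint.toFun
    (innerₛₗ ℂ f ∘ₗ T.adjoint.domain.subtype) _ hbound
  obtain ⟨x, rfl, hTx⟩ := (LinearPMap.mem_graph_iff _).mp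
    (LinearPMap.mem_graph_of_forall_inner_adjoint hdense hclosed hy)
  obtain ⟨u, huN, hu, hTu⟩ := LinearPMap.exists_mem_orthogonal_ker_apply_eq hclosed x
  rw [hTx] at hTu
  refine ⟨u, hu, huN, hTu, fun u' hu' hu'N hTu' => ?_,
    LinearPMap.setOf_apply_eq_eq_add_ker (u := ⟨u, hu⟩) hTu⟩
  exact LinearPMap.eq_of_apply_eq_of_mem_orthogonal_ker (u := ⟨u, hu⟩) (u' := ⟨u', hu'⟩)
    (hTu'.trans hTu.symm) huN hu'N

theorem solution_set_eq_of_adjoint_estimate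
    {H₁ H₂ : Type*} [NormedAddCommGroup H₁] [InnerProductSpace ℂ H₁]
    [NormedAddCommGroup H₂] [InnerProductSpace ℂ H₂]
    [CompleteSpace H₁] [CompleteSpace H₂]
    (T : H₁ →ₗ.[ℂ] H₂)
    (hdense : Dense (T.domain : Set H₁))
    (hclosed : IsClosed (T.graph : Set (H₁ × H₂)))
    (F : Submodule ℂ H₂) (hF : IsClosed (F : Set H₂))
    (hR : Set.range (fun x : T.domain => T x) ⊆ (F : Set H₂))
    (C : ℝ) (hC : 0 < C)
    (hest : ∀ g : T.adjoint.domain, (g : H₂) ∈ F → ‖(g : H₂)‖ ≤ C * ‖T.adjoint g‖)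
    (f : H₂) (hf : f ∈ F) :
    ∃ u : H₁, ∃ hu : u ∈ T.domain,
      u ∈ ((LinearMap.ker T.toFun).map T.domain.subtype)ᗮ ∧
      T ⟨u, hu⟩ = f ∧
      (∀ (u' : H₁) (hu' : u' ∈ T.domain),
        u' ∈ ((LinearMap.ker T.toFun).map T.domain.subtype)ᗮ → T ⟨u', hu'⟩ = f → u' = u) ∧
      {x : H₁ | ∃ hx : x ∈ T.domain, T ⟨x, hx⟩ = f} =
        {w : H₁ | ∃ v ∈ (LinearMap.ker T.toFun).map T.domain.subtype, w = u + v} :=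
  solution_set_eq_of_adjoint_estimate_general T hdense hclosed F hF hR C hest f hf
end

section
/- (Fernique-type estimate) Let $p \in [1,\infty)$, $P$ the Gaussian product measure on $\ell^p$ with $\sum_i a_i < 1$, and $\varphi \in (\ell^p)^*$ a nonzero bounded linear functional. Then for every $\epsilon \le 1/\|\varphi\|_{(\ell^p)^*}$, $\int_{\ell^p} e^{\epsilon|\varphi(\mathbf{z})|}\, dP(\mathbf{z}) \le \int_{\ell^1} e^{\|\mathbf{z}\|_{\ell^1}}\, dP(\mathbf{z}) < \infty$. -/
open MeasureTheory ProbabilityTheory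
open scoped ENNReal

/-- The centered Gaussian measure on `ℂ ≅ ℝ²` with standard deviation `a` in each
real coordinate. -/
noncomputable def planarGaussian (a : ℝ) : Measure ℂ :=
  ((gaussianReal 0 (a ^ 2).toNNReal).prod (gaussianReal 0 (a ^ 2).toNNReal)).map
    (fun q : ℝ × ℝ => Complex.equivRealProd.symm q)

/-!
Write `e^{|x|} = cosh x + sinh |x|` and bound `sinh |x| ≤ a/2 + sinh² x / (2a)` by AM-GM.
Since `sinh² x = (cosh 2x - 1)/2`, the Gaussian moment generating function gives
`E e^{|X|} ≤ e^{4a}` for `X ~ N(0, a²)`, `0 < a ≤ 1`, hence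
`E exp (|Re zᵢ| + |Im zᵢ|) ≤ e^{8 aᵢ}` for every coordinate. By independence the partial sums
`Sₙ = ∑_{i<n} (|Re zᵢ| + |Im zᵢ|)` satisfy `E e^{Sₙ} ≤ e^{8 ∑ aᵢ}`, and monotone convergence
bounds `E supₙ e^{Sₙ}`. This gives both the finiteness and the almost sure convergence of the
series, and on that event `ε |φ z| ≤ ‖z‖_p ≤ ∑ |zᵢ| ≤ ∑ (|Re zᵢ| + |Im zᵢ|)`.
-/

open Real
open scoped NNReal

lemma exp_abs_le_cosh_add {a : ℝ} (ha : 0 < a) (x : ℝ) :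
    exp |x| ≤ cosh x + a / 2 + (cosh (2 * x) - 1) / (4 * a) := by
  have hsinh : sinh |x| ^ 2 = sinh x ^ 2 := by
    rcases abs_choice x with h | h <;> simp [h]
  rw [← cosh_add_sinh, cosh_abs, cosh_two_mul, cosh_sq, ← hsinh,
    show (sinh |x| ^ 2 + 1 + sinh |x| ^ 2 - 1) / (4 * a) = sinh |x| ^ 2 / (2 * a) by ring]
  have hamgm : sinh |x| ≤ a / 2 + sinh |x| ^ 2 / (2 * a) := by
    rw [div_add_div _ _ two_ne_zero (by positivity), le_div_iff₀ (by positivity)]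
    nlinarith [sq_nonneg (sinh |x| - a)]
  linarith

lemma exp_sq_div_two_add_le_exp_four_mul {a : ℝ} (ha : 0 < a) (ha1 : a ≤ 1) :
    exp (a ^ 2 / 2) + a / 2 + (exp (2 * a ^ 2) - 1) / (4 * a) ≤ exp (4 * a) := by
  have hsq0 : 0 ≤ a ^ 2 := sq_nonneg a
  have hsq : exp (a ^ 2) - 1 ≤ 2 * a ^ 2 := by
    have h := abs_exp_sub_one_le (x := a ^ 2) (by rw [abs_of_nonneg hsq0]; nlinarith)
    rw [abs_of_nonneg hsq0] at h
    exact (le_abs_self _).trans h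
  have hhalf : exp (a ^ 2 / 2) - 1 ≤ a ^ 2 := by
    have hhalf0 : 0 ≤ a ^ 2 / 2 := by positivity
    have h := abs_exp_sub_one_le (x := a ^ 2 / 2) (by rw [abs_of_nonneg hhalf0]; nlinarith)
    rw [abs_of_nonneg hhalf0] at h
    linarith [le_abs_self (exp (a ^ 2 / 2) - 1)]
  have htwo : (exp (2 * a ^ 2) - 1) / (4 * a) ≤ 2 * a := by
    have hfactor : exp (2 * a ^ 2) - 1 = (exp (a ^ 2) - 1) * (exp (a ^ 2) + 1) := by
      rw [show 2 * a ^ 2 = a ^ 2 + a ^ 2 by ring, exp_add]; ring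
    have hle : (exp (a ^ 2) - 1) * (exp (a ^ 2) + 1) ≤ 2 * a ^ 2 * 4 :=
      mul_le_mul hsq (by nlinarith) (by positivity) (by positivity)
    rw [div_le_iff₀ (by positivity)]
    nlinarith
  nlinarith [add_one_le_exp (4 * a)]

section Gaussian

variable {v : ℝ≥0}

lemma integral_exp_mul_gaussianReal (t : ℝ) :
    ∫ x, exp (t * x) ∂gaussianReal 0 v = exp (v * t ^ 2 / 2) := by
  simpa [mgf] using congrFun (mgf_fun_id_gaussianReal (μ := 0) (v := v)) t

lemma integrable_cosh_mul_gaussianReal (t : ℝ) :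
    Integrable (fun x ↦ cosh (t * x)) (gaussianReal 0 v) := by
  simp_rw [cosh_eq, ← neg_mul]
  exact ((integrable_exp_mul_gaussianReal t).add (integrable_exp_mul_gaussianReal (-t))).div_const 2

lemma integral_cosh_mul_gaussianReal (t : ℝ) :
    ∫ x, cosh (t * x) ∂gaussianReal 0 v = exp (v * t ^ 2 / 2) := by
  simp_rw [cosh_eq, ← neg_mul]
  rw [integral_div, integral_add (integrable_exp_mul_gaussianReal t)
    (integrable_exp_mul_gaussianReal (-t)), integral_exp_mul_gaussianReal,
    integral_exp_mul_gaussianReal, neg_sq, add_self_div_two]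

lemma lintegral_exp_abs_gaussianReal_le {a : ℝ} (ha : 0 < a) :
    ∫⁻ x, ENNReal.ofReal (exp |x|) ∂gaussianReal 0 v
      ≤ ENNReal.ofReal (exp (v / 2) + a / 2 + (exp (2 * v) - 1) / (4 * a)) := by
  have hcosh : Integrable (fun x ↦ cosh x) (gaussianReal 0 v) := by
    simpa using integrable_cosh_mul_gaussianReal (v := v) 1
  have hcosh2 : Integrable (fun x ↦ cosh (2 * x)) (gaussianReal 0 v) :=
    integrable_cosh_mul_gaussianReal 2
  have hA : Integrable (fun x ↦ cosh x + a / 2) (gaussianReal 0 v) :=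
    hcosh.add (integrable_const _)
  have hB : Integrable (fun x ↦ (cosh (2 * x) - 1) / (4 * a)) (gaussianReal 0 v) :=
    (hcosh2.sub (integrable_const _)).div_const _
  have hint : Integrable (fun x ↦ cosh x + a / 2 + (cosh (2 * x) - 1) / (4 * a))
      (gaussianReal 0 v) := hA.add hB
  have hmoment : ∫ x, (cosh x + a / 2 + (cosh (2 * x) - 1) / (4 * a)) ∂gaussianReal 0 v
      = exp (v / 2) + a / 2 + (exp (2 * v) - 1) / (4 * a) := by
    have h1 : ∫ x, cosh x ∂gaussianReal 0 v = exp (v / 2) := by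
      simpa using integral_cosh_mul_gaussianReal (v := v) 1
    rw [integral_add hA hB, integral_add hcosh (integrable_const _), integral_const,
      integral_div, integral_sub hcosh2 (integrable_const _), integral_const, h1,
      integral_cosh_mul_gaussianReal]
    simp only [probReal_univ, smul_eq_mul, one_mul]
    ring_nf
  calc ∫⁻ x, ENNReal.ofReal (exp |x|) ∂gaussianReal 0 v
      ≤ ∫⁻ x, ENNReal.ofReal (cosh x + a / 2 + (cosh (2 * x) - 1) / (4 * a)) ∂gaussianReal 0 v :=
        lintegral_mono fun x ↦ ENNReal.ofReal_le_ofReal (exp_abs_le_cosh_add ha x)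
    _ = ENNReal.ofReal (exp (v / 2) + a / 2 + (exp (2 * v) - 1) / (4 * a)) := by
        rw [← ofReal_integral_eq_lintegral_ofReal hint
          (ae_of_all _ fun x ↦ (exp_pos |x|).le.trans (exp_abs_le_cosh_add ha x)), hmoment]

end Gaussian

lemma lintegral_exp_abs_gaussianReal_sq_le {a : ℝ} (ha : 0 < a) (ha1 : a ≤ 1) :
    ∫⁻ x, ENNReal.ofReal (exp |x|) ∂gaussianReal 0 (a ^ 2).toNNReal
      ≤ ENNReal.ofReal (exp (4 * a)) := by
  refine (lintegral_exp_abs_gaussianReal_le ha).trans (ENNReal.ofReal_le_ofReal ?_)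
  rw [Real.coe_toNNReal _ (by positivity)]
  exact exp_sq_div_two_add_le_exp_four_mul ha ha1

lemma lintegral_exp_abs_re_add_abs_im_planarGaussian_le {a : ℝ} (ha : 0 < a) (ha1 : a ≤ 1) :
    ∫⁻ w, ENNReal.ofReal (exp (|w.re| + |w.im|)) ∂planarGaussian a
      ≤ ENNReal.ofReal (exp (8 * a)) := by
  have hmeas : Measurable fun x : ℝ ↦ ENNReal.ofReal (exp |x|) := by fun_prop
  rw [planarGaussian, lintegral_map (by fun_prop)
    (by exact Complex.measurableEquivRealProd.symm.measurable)]
  simp only [Complex.equivRealProd_symm_apply, Complex.add_re, Complex.ofReal_re,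
    Complex.mul_re, Complex.I_re, Complex.ofReal_im, Complex.I_im, Complex.add_im,
    Complex.mul_im, mul_zero, sub_zero, mul_one, add_zero, zero_add, exp_add,
    ENNReal.ofReal_mul (exp_pos _).le]
  rw [lintegral_prod_mul hmeas.aemeasurable hmeas.aemeasurable,
    show 8 * a = 4 * a + 4 * a by ring, exp_add, ENNReal.ofReal_mul (exp_pos _).le]
  exact mul_le_mul' (lintegral_exp_abs_gaussianReal_sq_le ha ha1)
    (lintegral_exp_abs_gaussianReal_sq_le ha ha1)

section Independent

variable {Ω : Type*} [MeasurableSpace Ω] {μ : Measure Ω}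

lemma lintegral_exp_sum_le_of_iIndepFun {ι : Type*} {G : ι → Ω → ℝ} {c : ι → ℝ}
    (hG : ∀ i, Measurable (G i)) (hindep : iIndepFun G μ)
    (hGc : ∀ i, ∫⁻ ω, ENNReal.ofReal (exp (G i ω)) ∂μ ≤ ENNReal.ofReal (exp (c i)))
    (s : Finset ι) :
    ∫⁻ ω, ENNReal.ofReal (exp (∑ i ∈ s, G i ω)) ∂μ ≤ ENNReal.ofReal (exp (∑ i ∈ s, c i)) := by
  simp only [exp_sum, ENNReal.ofReal_prod_of_nonneg fun i _ ↦ (exp_pos _).le]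
  exact (lintegral_prod_eq_prod_lintegral_of_indepFun s (fun i ω ↦ ENNReal.ofReal (exp (G i ω)))
    (hindep.comp (fun _ x ↦ ENNReal.ofReal (exp x)) fun _ ↦ by fun_prop)
    fun i ↦ by fun_prop).trans_le (Finset.prod_le_prod' fun i _ ↦ hGc i)

lemma lintegral_iSup_exp_sum_range_le_of_iIndepFun {G : ℕ → Ω → ℝ} {c : ℕ → ℝ}
    (hG : ∀ i, Measurable (G i)) (hG0 : ∀ i ω, 0 ≤ G i ω) (hindep : iIndepFun G μ)
    (hc : Summable c) (hc0 : ∀ i, 0 ≤ c i)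
    (hGc : ∀ i, ∫⁻ ω, ENNReal.ofReal (exp (G i ω)) ∂μ ≤ ENNReal.ofReal (exp (c i))) :
    ∫⁻ ω, ⨆ N, ENNReal.ofReal (exp (∑ i ∈ Finset.range N, G i ω)) ∂μ
      ≤ ENNReal.ofReal (exp (∑' i, c i)) := by
  have hmono : Monotone fun N ω ↦ ENNReal.ofReal (exp (∑ i ∈ Finset.range N, G i ω)) :=
    fun M N hMN ω ↦ ENNReal.ofReal_le_ofReal <| exp_le_exp.2 <|
      Finset.sum_le_sum_of_subset_of_nonneg (Finset.range_subset_range.2 hMN) fun i _ _ ↦ hG0 i ω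
  rw [lintegral_iSup (fun N ↦ by fun_prop) hmono]
  refine iSup_le fun N ↦ (lintegral_exp_sum_le_of_iIndepFun hG hindep hGc _).trans ?_
  exact ENNReal.ofReal_le_ofReal <| exp_le_exp.2 <| hc.sum_le_tsum _ fun i _ ↦ hc0 i

end Independent

section PartialSums

variable {g : ℕ → ℝ}

lemma ofReal_exp_tsum_le_iSup :
    ENNReal.ofReal (exp (∑' i, g i))
      ≤ ⨆ N, ENNReal.ofReal (exp (∑ i ∈ Finset.range N, g i)) := by
  by_cases hsum : Summable g
  · have hlim : Filter.Tendsto (fun N ↦ ENNReal.ofReal (exp (∑ i ∈ Finset.range N, g i)))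
        Filter.atTop (nhds (ENNReal.ofReal (exp (∑' i, g i)))) :=
      (ENNReal.continuous_ofReal.comp continuous_exp).continuousAt.tendsto.comp
        hsum.hasSum.tendsto_sum_nat
    exact le_of_tendsto' hlim fun N ↦ le_iSup_of_le N le_rfl
  · rw [tsum_eq_zero_of_not_summable hsum]
    exact le_iSup_of_le 0 (by simp)

lemma summable_of_iSup_exp_sum_range_ne_top (hg : ∀ i, 0 ≤ g i)
    (h : ⨆ N, ENNReal.ofReal (exp (∑ i ∈ Finset.range N, g i)) ≠ ⊤) : Summable g := by
  refine summable_of_sum_range_le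
    (c := (⨆ N, ENNReal.ofReal (exp (∑ i ∈ Finset.range N, g i))).toReal) hg fun N ↦ ?_
  calc ∑ i ∈ Finset.range N, g i ≤ exp (∑ i ∈ Finset.range N, g i) := by
        linarith [add_one_le_exp (∑ i ∈ Finset.range N, g i)]
    _ ≤ (⨆ N, ENNReal.ofReal (exp (∑ i ∈ Finset.range N, g i))).toReal :=
        (ENNReal.ofReal_le_iff_le_toReal h).1 (le_iSup_of_le N le_rfl)

end PartialSums

lemma lp.norm_le_tsum_of_forall_norm_le {α : Type*} {E : α → Type*}
    [∀ i, NormedAddCommGroup (E i)] {p : ℝ≥0∞} [Fact (1 ≤ p)] (hp : p ≠ ⊤) (f : lp E p)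
    {g : α → ℝ} (hg : Summable g) (hfg : ∀ i, ‖f i‖ ≤ g i) : ‖f‖ ≤ ∑' i, g i := by
  classical
  exact (lp.hasSum_single hp f).norm_le_of_bounded hg.hasSum fun i ↦
    (lp.norm_single (zero_lt_one.trans_le Fact.out) i (f i)).trans_le (hfg i)

lemma ContinuousLinearMap.mul_norm_apply_le_of_le_one_div_opNorm {𝕜 E F : Type*}
    [NontriviallyNormedField 𝕜] [SeminormedAddCommGroup E] [NormedSpace 𝕜 E]
    [SeminormedAddCommGroup F] [NormedSpace 𝕜 F] (φ : E →L[𝕜] F) {ε : ℝ} (hε : ε ≤ 1 / ‖φ‖)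
    (x : E) : ε * ‖φ x‖ ≤ ‖x‖ := by
  rcases le_or_gt ε 0 with hε0 | hε0
  · exact (mul_nonpos_of_nonpos_of_nonneg hε0 (norm_nonneg _)).trans (norm_nonneg x)
  · have hφ : 0 < ‖φ‖ := one_div_pos.1 (hε0.trans_le hε)
    calc ε * ‖φ x‖ ≤ ε * (‖φ‖ * ‖x‖) := by gcongr; exact φ.le_opNorm x
      _ = ε * ‖φ‖ * ‖x‖ := by ring
      _ ≤ 1 * ‖x‖ := by gcongr; rwa [le_div_iff₀ hφ] at hε
      _ = ‖x‖ := one_mul _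

theorem fernique_type_estimate_general
    (a : ℕ → ℝ) (ha : ∀ i, 0 < a i) (hsummable : Summable a) (hsum : ∑' i, a i < 1)
    (p : ℝ≥0∞) [Fact (1 ≤ p)] (hp' : p ≠ ⊤)
    [MeasurableSpace (lp (fun _ : ℕ => ℂ) p)] [BorelSpace (lp (fun _ : ℕ => ℂ) p)]
    (P : Measure (lp (fun _ : ℕ => ℂ) p)) [IsProbabilityMeasure P]
    (hindep : iIndepFun
      (fun i (z : lp (fun _ : ℕ => ℂ) p) => (z : ∀ _ : ℕ, ℂ) i) P)
    (hmarg : ∀ i, P.map (fun z : lp (fun _ : ℕ => ℂ) p => (z : ∀ _ : ℕ, ℂ) i)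
      = planarGaussian (a i))
    (φ : StrongDual ℂ (lp (fun _ : ℕ => ℂ) p))
    (ε : ℝ) (hε : ε ≤ 1 / ‖φ‖) :
    ∫⁻ z, ENNReal.ofReal (Real.exp (ε * ‖φ z‖)) ∂P
      ≤ ∫⁻ z, ENNReal.ofReal
          (Real.exp (∑' n, (|((z : ∀ _ : ℕ, ℂ) n).re| + |((z : ∀ _ : ℕ, ℂ) n).im|))) ∂P
    ∧ ∫⁻ z, ENNReal.ofReal
          (Real.exp (∑' n, (|((z : ∀ _ : ℕ, ℂ) n).re| + |((z : ∀ _ : ℕ, ℂ) n).im|))) ∂P < ⊤ := by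
  set G : ℕ → lp (fun _ : ℕ => ℂ) p → ℝ :=
    fun n z ↦ |((z : ∀ _ : ℕ, ℂ) n).re| + |((z : ∀ _ : ℕ, ℂ) n).im|
  have hcoord (i : ℕ) : Measurable fun z : lp (fun _ : ℕ => ℂ) p ↦ (z : ∀ _ : ℕ, ℂ) i :=
    (lp.lipschitzWith_one_eval p i).continuous.measurable
  have hG (i : ℕ) : Measurable (G i) :=
    ((Complex.measurable_re.comp (hcoord i)).abs).add (Complex.measurable_im.comp (hcoord i)).abs
  have hG0 (i : ℕ) z : 0 ≤ G i z := by positivity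
  have hGindep : iIndepFun G P := hindep.comp (fun _ w ↦ |w.re| + |w.im|) fun _ ↦ by fun_prop
  have hGbound (i : ℕ) :
      ∫⁻ z, ENNReal.ofReal (exp (G i z)) ∂P ≤ ENNReal.ofReal (exp (8 * a i)) := by
    have ha1 : a i ≤ 1 := (hsummable.le_tsum i fun j _ ↦ (ha j).le).trans hsum.le
    rw [← lintegral_map (f := fun w : ℂ ↦ ENNReal.ofReal (exp (|w.re| + |w.im|))) (by fun_prop)
      (hcoord i), hmarg i]
    exact lintegral_exp_abs_re_add_abs_im_planarGaussian_le (ha i) ha1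
  have hsup := lintegral_iSup_exp_sum_range_le_of_iIndepFun hG hG0 hGindep
    (hsummable.mul_left 8) (fun i ↦ by linarith [ha i]) hGbound
  have hsup_lt_top := hsup.trans_lt ENNReal.ofReal_lt_top
  have hG_summable : ∀ᵐ z ∂P, Summable (G · z) := by
    filter_upwards [ae_lt_top (by fun_prop) hsup_lt_top.ne] with z hz
    exact summable_of_iSup_exp_sum_range_ne_top (hG0 · z) hz.ne
  refine ⟨lintegral_mono_ae ?_,
    (lintegral_mono fun z ↦ ofReal_exp_tsum_le_iSup).trans_lt hsup_lt_top⟩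
  filter_upwards [hG_summable] with z hz
  refine ENNReal.ofReal_le_ofReal <| exp_le_exp.2 <|
    (φ.mul_norm_apply_le_of_le_one_div_opNorm hε z).trans ?_
  exact lp.norm_le_tsum_of_forall_norm_le hp' z hz fun n ↦ Complex.norm_le_abs_re_add_abs_im _

theorem fernique_type_estimate
    (a : ℕ → ℝ) (ha : ∀ i, 0 < a i) (hsummable : Summable a) (hsum : ∑' i, a i < 1)
    (p : ℝ≥0∞) [Fact (1 ≤ p)] (hp' : p ≠ ⊤)
    [MeasurableSpace (lp (fun _ : ℕ => ℂ) p)] [BorelSpace (lp (fun _ : ℕ => ℂ) p)]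
    (P : Measure (lp (fun _ : ℕ => ℂ) p)) [IsProbabilityMeasure P]
    (hindep : iIndepFun
      (fun i (z : lp (fun _ : ℕ => ℂ) p) => (z : ∀ _ : ℕ, ℂ) i) P)
    (hmarg : ∀ i, P.map (fun z : lp (fun _ : ℕ => ℂ) p => (z : ∀ _ : ℕ, ℂ) i)
      = planarGaussian (a i))
    (φ : StrongDual ℂ (lp (fun _ : ℕ => ℂ) p)) (hφ : φ ≠ 0)
    (ε : ℝ) (hε : ε ≤ 1 / ‖φ‖) :
    ∫⁻ z, ENNReal.ofReal (Real.exp (ε * ‖φ z‖)) ∂P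
      ≤ ∫⁻ z, ENNReal.ofReal
          (Real.exp (∑' n, (|((z : ∀ _ : ℕ, ℂ) n).re| + |((z : ∀ _ : ℕ, ℂ) n).im|))) ∂P
    ∧ ∫⁻ z, ENNReal.ofReal
          (Real.exp (∑' n, (|((z : ∀ _ : ℕ, ℂ) n).re| + |((z : ∀ _ : ℕ, ℂ) n).im|))) ∂P < ⊤ :=
  fernique_type_estimate_general a ha hsummable hsum p hp' P hindep hmarg φ ε hε
end
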